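/- arXiv:1606.07911 — 6 statements merged into one kernel-verified Lean document; each statement's English description precedes it below -/
import Mathlib

section
/- Let n be a positive integer with at most s distinct prime factors, d a divisor of n, and x a positive real number. Then the number of integers i in [1, x) with gcd(i, n) = d is at most (x/n)·φ(n/d) + 2^s, where φ is Euler's totient function. -/
open Finset ArithmeticFunction
open scoped ArithmeticFunction.Moebius ArithmeticFunction.zeta

lemma sum_mu_eq (k : ℕ) : ∑ e ∈ k.divisors, ((μ e : ℤ) : ℝ) = if k = 1 then 1 else 0 := by
  have h : ((μ : ArithmeticFunction ℝ) * ζ) k = (1 : ArithmeticFunction ℝ) k := by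
    rw [ArithmeticFunction.coe_moebius_mul_coe_zeta]
  rw [ArithmeticFunction.coe_mul_zeta_apply, ArithmeticFunction.one_apply] at h
  simpa using h

lemma count_IE (m K : ℕ) (hm : 0 < m) :
    ((((Finset.Ioc 0 K).filter fun j => Nat.gcd j m = 1).card : ℝ)) =
      ∑ e ∈ m.divisors, ((μ e : ℤ) : ℝ) * ((K / e : ℕ) : ℝ) := by
  have key : ∀ j ∈ Finset.Ioc 0 K, (if Nat.gcd j m = 1 then (1:ℝ) else 0)
      = ∑ e ∈ m.divisors, (if e ∣ j then ((μ e : ℤ) : ℝ) else 0) := by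
    intro j hj
    have hj0 : 0 < j := (Finset.mem_Ioc.mp hj).1
    have hg : Nat.gcd j m ≠ 0 := (Nat.gcd_pos_of_pos_left _ hj0).ne'
    have hdiv : (Nat.gcd j m).divisors = m.divisors.filter (· ∣ j) := by
      ext e
      simp only [Nat.mem_divisors, Finset.mem_filter, Nat.dvd_gcd_iff]
      constructor
      · rintro ⟨⟨h1, h2⟩, _⟩; exact ⟨⟨h2, hm.ne'⟩, h1⟩
      · rintro ⟨⟨h2, _⟩, h1⟩; exact ⟨⟨h1, h2⟩, hg⟩
    calc (if Nat.gcd j m = 1 then (1:ℝ) else 0)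
        = ∑ e ∈ (Nat.gcd j m).divisors, ((μ e : ℤ) : ℝ) := (sum_mu_eq _).symm
      _ = ∑ e ∈ m.divisors.filter (· ∣ j), ((μ e : ℤ) : ℝ) := by rw [hdiv]
      _ = ∑ e ∈ m.divisors, (if e ∣ j then ((μ e : ℤ) : ℝ) else 0) := Finset.sum_filter _ _
  rw [Finset.card_filter]
  push_cast
  rw [Finset.sum_congr rfl key, Finset.sum_comm]
  refine Finset.sum_congr rfl fun e he => ?_
  rw [← Finset.sum_filter, Finset.sum_const, nsmul_eq_mul,
    Nat.Ioc_filter_dvd_card_eq_div, mul_comm]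

lemma sum_mu_div_eq_totient (m : ℕ) (hm : 0 < m) :
    ∑ e ∈ m.divisors, ((μ e : ℤ) : ℝ) * ((m / e : ℕ) : ℝ) = (Nat.totient m : ℝ) := by
  have h := (ArithmeticFunction.sum_eq_iff_sum_mul_moebius_eq (R := ℝ)
      (f := fun d => (Nat.totient d : ℝ)) (g := fun n => (n : ℝ))).mp
      (fun k hk => by exact_mod_cast Nat.sum_totient k) m hm
  rw [← Nat.sum_divisorsAntidiagonal (fun a b => ((μ a : ℤ) : ℝ) * (b : ℝ))]
  exact h

lemma sum_abs_mu (m : ℕ) (hm : 0 < m) :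
    ∑ e ∈ m.divisors, |((μ e : ℤ) : ℝ)| = 2 ^ m.primeFactors.card := by
  have h1 : ∀ e : ℕ, |((μ e : ℤ) : ℝ)| = if Squarefree e then 1 else 0 := by
    intro e
    rw [← Int.cast_abs, ArithmeticFunction.abs_moebius]
    split <;> simp
  simp_rw [h1]
  rw [← Finset.sum_filter, Nat.sum_divisors_filter_squarefree hm.ne']
  have h2 : (UniqueFactorizationMonoid.normalizedFactors m).toFinset = m.primeFactors := by
    rw [Nat.factors_eq]
    simp [Nat.toFinset_factors]
  rw [h2, Finset.sum_const, Finset.card_powerset]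
  simp

theorem count_gcd_eq_le (n : ℕ) (hn : 0 < n) (s : ℕ) (hs : n.primeFactors.card ≤ s)
    (d : ℕ) (hd : d ∣ n) (x : ℝ) (hx : 0 < x) :
    (((Finset.Ico 1 ⌈x⌉₊).filter (fun i => Nat.gcd i n = d)).card : ℝ) ≤
      (x / n) * (Nat.totient (n / d) : ℝ) + 2 ^ s := by
  have hd0 : 0 < d := Nat.pos_of_dvd_of_pos hd hn
  have hdR : (0:ℝ) < d := by exact_mod_cast hd0
  set m := n / d with hm_def
  have hm : 0 < m := Nat.div_pos (Nat.le_of_dvd hn hd) hd0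
  have hdm : d * m = n := Nat.mul_div_cancel' hd
  have hN : 0 < ⌈x / d⌉₊ := Nat.ceil_pos.mpr (div_pos hx hdR)
  set K : ℕ := ⌈x / d⌉₊ - 1 with hK_def
  have hKx : (K : ℝ) ≤ x / d := by
    have h1 : (⌈x / d⌉₊ : ℝ) < x / d + 1 := Nat.ceil_lt_add_one (le_of_lt (div_pos hx hdR))
    have h2 : (K : ℝ) = (⌈x / d⌉₊ : ℝ) - 1 := by
      rw [hK_def, Nat.cast_sub (by omega : 1 ≤ ⌈x/d⌉₊)]; simp
    linarith
  have hgcd : ∀ j : ℕ, Nat.gcd (d * j) n = d ↔ Nat.gcd j m = 1 := by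
    intro j
    rw [← hdm, Nat.gcd_mul_left]
    constructor
    · intro h; exact Nat.eq_of_mul_eq_mul_left hd0 (by simpa using h)
    · intro h; simp [h]
  have hlt : ∀ j : ℕ, (d * j < ⌈x⌉₊ ↔ j ≤ K) := by
    intro j
    rw [Nat.lt_ceil]
    have : ((d * j : ℕ) : ℝ) < x ↔ (j : ℝ) < x / d := by
      rw [lt_div_iff₀ hdR]; push_cast; rw [mul_comm]
    rw [this, ← Nat.lt_ceil]
    omega
  have himg : (Finset.Ico 1 ⌈x⌉₊).filter (fun i => Nat.gcd i n = d)
      = ((Finset.Ioc 0 K).filter fun j => Nat.gcd j m = 1).image (fun j => d * j) := by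
    ext i
    simp only [Finset.mem_filter, Finset.mem_Ico, Finset.mem_image, Finset.mem_Ioc]
    constructor
    · rintro ⟨⟨h1, h2⟩, h3⟩
      obtain ⟨j, rfl⟩ : d ∣ i := h3 ▸ Nat.gcd_dvd_left i n
      have hj0 : 0 < j := Nat.pos_of_ne_zero fun h => by simp [h] at h1
      exact ⟨j, ⟨⟨hj0, (hlt j).mp h2⟩, (hgcd j).mp h3⟩, rfl⟩
    · rintro ⟨j, ⟨⟨hj0, hjK⟩, hj1⟩, rfl⟩
      exact ⟨⟨Nat.one_le_iff_ne_zero.mpr (Nat.mul_ne_zero hd0.ne' hj0.ne'),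
        (hlt j).mpr hjK⟩, (hgcd j).mpr hj1⟩
  rw [himg, Finset.card_image_of_injective _ (mul_right_injective₀ hd0.ne')]
  rw [count_IE m K hm]
  have step1 : ∑ e ∈ m.divisors, ((μ e : ℤ) : ℝ) * ((K / e : ℕ) : ℝ) ≤
      ∑ e ∈ m.divisors, (((μ e : ℤ) : ℝ) * ((K : ℝ) / e) + |((μ e : ℤ) : ℝ)|) := by
    refine Finset.sum_le_sum fun e he => ?_
    have he0 : 0 < e := Nat.pos_of_mem_divisors he
    have heR : (0:ℝ) < e := by exact_mod_cast he0
    have hfl : |(((K / e : ℕ) : ℝ)) - (K : ℝ) / e| ≤ 1 := by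
      have h1 : ((K / e : ℕ) : ℝ) ≤ (K : ℝ) / e := by
        rw [le_div_iff₀ heR]
        exact_mod_cast Nat.div_mul_le_self K e
      have h2 : (K : ℝ) / e < ((K / e : ℕ) : ℝ) + 1 := by
        rw [div_lt_iff₀ heR]
        have hlt2 : K < (K / e + 1) * e := by
          calc K = e * (K / e) + K % e := (Nat.div_add_mod K e).symm
            _ < e * (K / e) + e := Nat.add_lt_add_left (Nat.mod_lt K he0) _
            _ = (K / e + 1) * e := by ring
        exact_mod_cast hlt2
      rw [abs_le]; constructor <;> linarith
    have : ((μ e : ℤ) : ℝ) * ((K / e : ℕ) : ℝ) - ((μ e : ℤ) : ℝ) * ((K : ℝ) / e)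
        ≤ |((μ e : ℤ) : ℝ)| := by
      calc ((μ e : ℤ) : ℝ) * ((K / e : ℕ) : ℝ) - ((μ e : ℤ) : ℝ) * ((K : ℝ) / e)
          = ((μ e : ℤ) : ℝ) * (((K / e : ℕ) : ℝ) - (K : ℝ) / e) := by ring
        _ ≤ |((μ e : ℤ) : ℝ) * (((K / e : ℕ) : ℝ) - (K : ℝ) / e)| := le_abs_self _
        _ = |((μ e : ℤ) : ℝ)| * |(((K / e : ℕ) : ℝ)) - (K : ℝ) / e| := abs_mul _ _
        _ ≤ |((μ e : ℤ) : ℝ)| * 1 := by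
            exact mul_le_mul_of_nonneg_left hfl (abs_nonneg _)
        _ = |((μ e : ℤ) : ℝ)| := mul_one _
    linarith
  have step2 : ∑ e ∈ m.divisors, ((μ e : ℤ) : ℝ) * ((K : ℝ) / e)
      = ((K : ℝ) / m) * (Nat.totient m : ℝ) := by
    rw [← sum_mu_div_eq_totient m hm, Finset.mul_sum]
    refine Finset.sum_congr rfl fun e he => ?_
    have he0 : (e:ℝ) ≠ 0 := by exact_mod_cast (Nat.pos_of_mem_divisors he).ne'
    have hem : e ∣ m := Nat.dvd_of_mem_divisors he
    rw [Nat.cast_div hem he0]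
    have hmR : (m:ℝ) ≠ 0 := by exact_mod_cast hm.ne'
    field_simp
  have step3 : ∑ e ∈ m.divisors, |((μ e : ℤ) : ℝ)| ≤ (2:ℝ) ^ s := by
    rw [sum_abs_mu m hm]
    have hsub : m.primeFactors ⊆ n.primeFactors :=
      Nat.primeFactors_mono (Nat.div_dvd_of_dvd hd) hn.ne'
    exact pow_le_pow_right₀ (by norm_num) (le_trans (Finset.card_le_card hsub) hs)
  have step4 : ((K : ℝ) / m) * (Nat.totient m : ℝ) ≤ (x / n) * (Nat.totient m : ℝ) := by
    apply mul_le_mul_of_nonneg_right _ (by positivity)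
    have hmR : (0:ℝ) < m := by exact_mod_cast hm
    have hnR : (n:ℝ) = d * m := by exact_mod_cast hdm.symm
    rw [hnR, div_le_div_iff₀ hmR (by positivity)]
    calc (K:ℝ) * (d * m) = ((K:ℝ) * d) * m := by ring
      _ ≤ (x / d * d) * m := by
          apply mul_le_mul_of_nonneg_right _ hmR.le
          exact mul_le_mul_of_nonneg_right hKx hdR.le
      _ = x * m := by field_simp
  calc ∑ e ∈ m.divisors, ((μ e : ℤ) : ℝ) * ((K / e : ℕ) : ℝ)
      ≤ ∑ e ∈ m.divisors, (((μ e : ℤ) : ℝ) * ((K : ℝ) / e) + |((μ e : ℤ) : ℝ)|) := step1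
    _ = ∑ e ∈ m.divisors, ((μ e : ℤ) : ℝ) * ((K : ℝ) / e)
        + ∑ e ∈ m.divisors, |((μ e : ℤ) : ℝ)| := Finset.sum_add_distrib
    _ ≤ ((K : ℝ) / m) * (Nat.totient m : ℝ) + 2 ^ s := by rw [step2]; linarith
    _ ≤ (x / n) * (Nat.totient m : ℝ) + 2 ^ s := by linarith
end

section
/- Let b ≥ 2 be an integer and a, m, m' integers with m, m' nonzero, gcd(m, b) = gcd(m', b) = 1. Let τ = ord(b, m') be the multiplicative order of b modulo m'. Then |∑_{n=1}^N e(a b^n / m)|² ≤ m' N + 2 m' ∑_{1 ≤ i < N/τ} |∑_{n=1}^{N - iτ} e(a(b^{iτ} − 1) b^n / m)|, where e(z) = exp(2πiz). -/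
open Finset Real Complex

private lemma exp_mul_conj (a m b : ℤ) (k n : ℕ) :
    Complex.exp (2*π*I*((a:ℂ)*(b:ℂ)^(n+k)/(m:ℂ))) *
      (starRingEnd ℂ) (Complex.exp (2*π*I*((a:ℂ)*(b:ℂ)^n/(m:ℂ)))) =
    Complex.exp (2*π*I*(((a*(b^k-1):ℤ):ℂ)*(b:ℂ)^n/(m:ℂ))) := by
  rw [← Complex.exp_conj, ← Complex.exp_add]
  congr 1
  simp only [map_mul, map_div₀, map_pow, map_ofNat, Complex.conj_I, Complex.conj_ofReal,
    map_intCast]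
  push_cast
  ring

private lemma fiber_eq (A : Finset ℕ) (τ r : ℕ) :
    ((A ×ˢ A).filter (fun p => p.1 % τ = p.2 % τ)).filter (fun p => p.1 % τ = r)
      = (A.filter (fun n => n % τ = r)) ×ˢ (A.filter (fun n => n % τ = r)) := by
  ext q
  simp only [Finset.mem_filter, Finset.mem_product]
  constructor
  · rintro ⟨⟨⟨hx, hy⟩, he⟩, hr⟩
    exact ⟨⟨hx, hr⟩, hy, he.symm.trans hr⟩
  · rintro ⟨⟨hx, hr⟩, hy, hr'⟩
    exact ⟨⟨⟨hx, hy⟩, hr.trans hr'.symm⟩, hr⟩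

private lemma mem_P_iff (A : Finset ℕ) (τ : ℕ) (p : ℕ × ℕ) :
    p ∈ (A ×ˢ A).filter (fun p => p.1 % τ = p.2 % τ)
      ↔ p.1 ∈ A ∧ p.2 ∈ A ∧ p.1 % τ = p.2 % τ := by
  simp [Finset.mem_filter, Finset.mem_product, and_assoc]

private lemma step3 (b a m : ℤ) (N τ : ℕ) (hτ : 0 < τ) :
    ∑ r ∈ range τ,
        ‖∑ n ∈ (Icc 1 N).filter (fun n => n % τ = r),
            Complex.exp (2*π*I*((a:ℂ)*(b:ℂ)^n/(m:ℂ)))‖ ^ 2 ≤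
      (N:ℝ) + 2 * ∑ i ∈ (Ico 1 N).filter (fun i => i * τ < N),
        ‖∑ n ∈ Icc 1 (N - i*τ),
            Complex.exp (2*π*I*(((a*(b^(i*τ)-1):ℤ):ℂ)*(b:ℂ)^n/(m:ℂ)))‖ := by
  classical
  set f : ℕ → ℂ := fun n => Complex.exp (2*π*I*((a:ℂ)*(b:ℂ)^n/(m:ℂ))) with hf
  have h1 : ∀ n, f n * (starRingEnd ℂ) (f n) = 1 := by
    intro n
    have := exp_mul_conj a m b 0 n
    simpa using this
  set A : Finset ℕ := Icc 1 N with hA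
  set P : Finset (ℕ × ℕ) := (A ×ˢ A).filter (fun p => p.1 % τ = p.2 % τ) with hP
  set g : ℕ × ℕ → ℂ := fun p => f p.1 * (starRingEnd ℂ) (f p.2) with hg
  set Iset : Finset ℕ := (Ico 1 N).filter (fun i => i * τ < N) with hI
  set W : ℂ := ∑ i ∈ Iset, ∑ n ∈ Icc 1 (N - i*τ),
      Complex.exp (2*π*I*(((a*(b^(i*τ)-1):ℤ):ℂ)*(b:ℂ)^n/(m:ℂ))) with hW
  have hsq : ∀ z : ℂ, ‖z‖^2 = (z * (starRingEnd ℂ) z).re := by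
    intro z
    rw [Complex.mul_conj, Complex.ofReal_re, Complex.normSq_eq_norm_sq]
  -- fiberwise decomposition of P
  have hfib : ∑ r ∈ range τ,
      ∑ p ∈ (A.filter (fun n => n % τ = r)) ×ˢ (A.filter (fun n => n % τ = r)), g p
      = ∑ p ∈ P, g p := by
    rw [← Finset.sum_fiberwise_of_maps_to (g := fun p : ℕ × ℕ => p.1 % τ) (t := range τ)
      (fun p _ => Finset.mem_range.2 (Nat.mod_lt _ hτ)) g]
    refine Finset.sum_congr rfl fun r _ => ?_
    refine Finset.sum_congr ?_ fun _ _ => rfl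
    exact (fiber_eq A τ r).symm
  have hexpand : ∑ r ∈ range τ,
      ‖∑ n ∈ A.filter (fun n => n % τ = r), f n‖ ^ 2
      = (∑ p ∈ P, g p).re := by
    rw [← hfib, Complex.re_sum]
    refine Finset.sum_congr rfl fun r _ => ?_
    rw [hsq, map_sum, Finset.sum_mul_sum]
    congr 1
    rw [Finset.sum_product]
  -- basic facts about elements of the lower triangle of P
  have key : ∀ p : ℕ × ℕ, p ∈ P.filter (fun p => p.2 < p.1) →
      ∃ c, p.1 - p.2 = c * τ ∧ (p.1 - p.2)/τ = c ∧ 1 ≤ c ∧ c < N ∧ c * τ < N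
        ∧ 1 ≤ p.2 ∧ p.1 ≤ N ∧ p.2 < p.1 := by
    intro p hp
    obtain ⟨hpP, hplt0⟩ := Finset.mem_filter.mp hp
    have hplt : p.2 < p.1 := hplt0
    obtain ⟨hp1, hp2, hmod⟩ := (mem_P_iff A τ p).mp hpP
    rw [hA, Finset.mem_Icc] at hp1 hp2
    obtain ⟨c, hc⟩ := (Nat.modEq_iff_dvd' hplt.le).mp hmod.symm
    rw [mul_comm] at hc
    have hdiv : (p.1 - p.2)/τ = c := by rw [hc]; exact Nat.mul_div_cancel c hτ
    have hc0 : c ≠ 0 := by rintro rfl; omega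
    have hcτN : c * τ < N := by omega
    have hcN : c < N := lt_of_le_of_lt (Nat.le_mul_of_pos_right c hτ) hcτN
    exact ⟨c, hc, hdiv, Nat.one_le_iff_ne_zero.2 hc0, hcN, hcτN, hp2.1, hp1.2, hplt⟩
  -- diagonal part
  have hdiag : ∑ p ∈ P.filter (fun p => p.1 = p.2), g p = (N:ℂ) := by
    have he : ∑ p ∈ P.filter (fun p => p.1 = p.2), g p = ∑ n ∈ A, (1:ℂ) := by
      refine Finset.sum_nbij' (fun p => p.1) (fun n => (n, n)) ?_ ?_ ?_ ?_ ?_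
      · intro p hp
        exact ((mem_P_iff A τ p).mp (Finset.mem_filter.mp hp).1).1
      · intro n hn
        exact Finset.mem_filter.mpr ⟨(mem_P_iff A τ (n, n)).mpr ⟨hn, hn, rfl⟩, rfl⟩
      · intro p hp
        have hd : p.1 = p.2 := (Finset.mem_filter.mp hp).2
        exact Prod.ext rfl hd
      · intro n _; rfl
      · intro p hp
        have hd : p.1 = p.2 := (Finset.mem_filter.mp hp).2
        show f p.1 * (starRingEnd ℂ) (f p.2) = 1
        rw [hd, h1]
    rw [he, Finset.sum_const, hA, Nat.card_Icc]
    simp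
  -- lower-triangle part
  have hlt : ∑ p ∈ P.filter (fun p => p.2 < p.1), g p = W := by
    have hmap : ∀ p ∈ P.filter (fun p => p.2 < p.1), (p.1 - p.2)/τ ∈ Iset := by
      intro p hp
      obtain ⟨c, hc, hdiv, hc1, hcN, hcτN, -, -, -⟩ := key p hp
      rw [hdiv, hI]
      exact Finset.mem_filter.mpr ⟨Finset.mem_Ico.mpr ⟨hc1, hcN⟩, hcτN⟩
    rw [← Finset.sum_fiberwise_of_maps_to hmap g, hW]
    refine Finset.sum_congr rfl fun i hi => ?_
    rw [hI] at hi
    obtain ⟨hiI, hi20⟩ := Finset.mem_filter.mp hi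
    have hi2 : i * τ < N := hi20
    have hi1 : 1 ≤ i := (Finset.mem_Ico.mp hiI).1
    refine Finset.sum_nbij' (fun p => p.2) (fun n => (n + i*τ, n)) ?_ ?_ ?_ ?_ ?_
    · intro p hp
      obtain ⟨hpPlt, hdiv20⟩ := Finset.mem_filter.mp hp
      have hdiv2 : (p.1 - p.2)/τ = i := hdiv20
      obtain ⟨c, hc, hdiv, -, -, -, h21, h12, hplt⟩ := key p hpPlt
      have hci : c = i := by rw [← hdiv]; exact hdiv2
      subst hci
      refine Finset.mem_Icc.mpr ⟨h21, ?_⟩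
      show p.2 ≤ N - c * τ
      omega
    · intro n hn
      obtain ⟨hn1, hn2⟩ := Finset.mem_Icc.mp hn
      have hle : n + i * τ ≤ N := by omega
      have hpos : 0 < i * τ := Nat.mul_pos hi1 hτ
      refine Finset.mem_filter.mpr ⟨Finset.mem_filter.mpr ⟨?_, ?_⟩, ?_⟩
      · refine (mem_P_iff A τ (n + i*τ, n)).mpr ⟨?_, ?_, ?_⟩
        · rw [hA]; exact Finset.mem_Icc.mpr ⟨by omega, hle⟩
        · rw [hA]; exact Finset.mem_Icc.mpr ⟨hn1, by omega⟩
        · exact Nat.add_mul_mod_self_right n i τ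
      · show n < n + i * τ
        omega
      · show (n + i * τ - n) / τ = i
        rw [Nat.add_sub_cancel_left]
        exact Nat.mul_div_cancel i hτ
    · intro p hp
      obtain ⟨hpPlt, hdiv20⟩ := Finset.mem_filter.mp hp
      have hdiv2 : (p.1 - p.2)/τ = i := hdiv20
      obtain ⟨c, hc, hdiv, -, -, -, -, -, hplt⟩ := key p hpPlt
      have hci : c = i := by rw [← hdiv]; exact hdiv2
      subst hci
      have h12 : p.2 + c * τ = p.1 := by omega
      exact Prod.ext h12 rfl
    · intro n _; rfl
    · intro p hp
      obtain ⟨hpPlt, hdiv20⟩ := Finset.mem_filter.mp hp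
      have hdiv2 : (p.1 - p.2)/τ = i := hdiv20
      obtain ⟨c, hc, hdiv, -, -, -, -, -, hplt⟩ := key p hpPlt
      have hci : c = i := by rw [← hdiv]; exact hdiv2
      subst hci
      have hp1 : p.1 = p.2 + c * τ := by omega
      show f p.1 * (starRingEnd ℂ) (f p.2) = _
      rw [hp1, hf]
      exact exp_mul_conj a m b (c*τ) p.2
  -- upper-triangle part
  have hgt : ∑ p ∈ P.filter (fun p => p.1 < p.2), g p = (starRingEnd ℂ) W := by
    rw [← hlt, map_sum]
    refine (Finset.sum_nbij' Prod.swap Prod.swap ?_ ?_ ?_ ?_ ?_).symm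
    · intro p hp
      obtain ⟨hpP, h0⟩ := Finset.mem_filter.mp hp
      have h : p.2 < p.1 := h0
      obtain ⟨hx, hy, he⟩ := (mem_P_iff A τ p).mp hpP
      exact Finset.mem_filter.mpr ⟨(mem_P_iff A τ p.swap).mpr ⟨hy, hx, he.symm⟩, h⟩
    · intro p hp
      obtain ⟨hpP, h0⟩ := Finset.mem_filter.mp hp
      have h : p.1 < p.2 := h0
      obtain ⟨hx, hy, he⟩ := (mem_P_iff A τ p).mp hpP
      exact Finset.mem_filter.mpr ⟨(mem_P_iff A τ p.swap).mpr ⟨hy, hx, he.symm⟩, h⟩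
    · intro p _; exact Prod.swap_swap p
    · intro p _; exact Prod.swap_swap p
    · intro p _
      show (starRingEnd ℂ) (f p.1 * (starRingEnd ℂ) (f p.2))
        = f p.2 * (starRingEnd ℂ) (f p.1)
      rw [map_mul, Complex.conj_conj]
      ring
  -- the splitting of P
  have hdisj : Disjoint (P.filter (fun p => p.2 < p.1)) (P.filter (fun p => p.1 < p.2)) := by
    rw [Finset.disjoint_left]
    intro p hp1 hp2
    have h1' : p.2 < p.1 := (Finset.mem_filter.mp hp1).2
    have h2' : p.1 < p.2 := (Finset.mem_filter.mp hp2).2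
    omega
  have hsplit : ∑ p ∈ P, g p = (N:ℂ) + W + (starRingEnd ℂ) W := by
    rw [← hdiag, ← hgt, ← hlt]
    rw [← Finset.sum_filter_add_sum_filter_not P (fun p => p.1 = p.2) g]
    have hunion : P.filter (fun p => ¬ p.1 = p.2)
        = (P.filter (fun p => p.2 < p.1)) ∪ (P.filter (fun p => p.1 < p.2)) := by
      ext p
      simp only [Finset.mem_filter, Finset.mem_union]
      constructor
      · rintro ⟨hp, hne⟩
        rcases Nat.lt_or_ge p.2 p.1 with h | h
        · exact Or.inl ⟨hp, h⟩
        · exact Or.inr ⟨hp, by omega⟩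
      · rintro (⟨hp, h⟩ | ⟨hp, h⟩) <;> exact ⟨hp, by omega⟩
    rw [hunion, Finset.sum_union hdisj]
    ring
  -- conclude
  have hWre : W.re ≤ ∑ i ∈ Iset, ‖∑ n ∈ Icc 1 (N - i*τ),
      Complex.exp (2*π*I*(((a*(b^(i*τ)-1):ℤ):ℂ)*(b:ℂ)^n/(m:ℂ)))‖ := by
    calc W.re ≤ ‖W‖ := Complex.re_le_norm W
      _ ≤ _ := by rw [hW]; exact norm_sum_le _ _
  calc ∑ r ∈ range τ, ‖∑ n ∈ A.filter (fun n => n % τ = r), f n‖ ^ 2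
      = (∑ p ∈ P, g p).re := hexpand
    _ = (N:ℝ) + 2 * W.re := by
        rw [hsplit]
        simp [Complex.add_re, Complex.conj_re]
        ring
    _ ≤ _ := by linarith

theorem differencing_lemma (b : ℤ) (hb : 2 ≤ b) (a m m' : ℤ)
    (hm : m ≠ 0) (hm' : m' ≠ 0)
    (hgcd : Int.gcd m b = 1) (hgcd' : Int.gcd m' b = 1) (N : ℕ)
    (τ : ℕ) (hτ : τ = orderOf (b : ZMod m'.natAbs)) :
    ‖∑ n ∈ Finset.Icc 1 N,
        Complex.exp (2 * π * I * ((a : ℂ) * (b : ℂ) ^ n / (m : ℂ)))‖ ^ 2 ≤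
      (m'.natAbs : ℝ) * N +
        2 * (m'.natAbs : ℝ) *
          ∑ i ∈ (Finset.Ico 1 N).filter (fun i => i * τ < N),
            ‖∑ n ∈ Finset.Icc 1 (N - i * τ),
                Complex.exp (2 * π * I *
                  (((a * (b ^ (i * τ) - 1) : ℤ) : ℂ) * (b : ℂ) ^ n / (m : ℂ)))‖ := by
  haveI : NeZero m'.natAbs := ⟨Int.natAbs_ne_zero.mpr hm'⟩
  have hτ0 : 0 < τ := by
    have hco0 : Nat.Coprime m'.natAbs b.natAbs := hgcd'
    have habs : b.natAbs = b.toNat := by omega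
    have hco : Nat.Coprime b.toNat m'.natAbs := by
      rw [← habs]; exact hco0.symm
    have hcast : ((b.toNat : ℕ) : ZMod m'.natAbs) = ((b : ℤ) : ZMod m'.natAbs) := by
      rw [← Int.cast_natCast]
      congr 1
      omega
    have hu : IsUnit ((b : ℤ) : ZMod m'.natAbs) := by
      rw [← hcast]
      exact (ZMod.isUnit_iff_coprime _ _).mpr hco
    obtain ⟨u, hu⟩ := hu
    rw [hτ, ← hu, orderOf_units]
    exact orderOf_pos u
  have hτM : τ ≤ m'.natAbs := by
    rw [hτ]
    calc orderOf ((b : ℤ) : ZMod m'.natAbs) ≤ Fintype.card (ZMod m'.natAbs) :=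
          orderOf_le_card_univ
      _ = m'.natAbs := ZMod.card _
  have step1 : ‖∑ n ∈ Finset.Icc 1 N,
      Complex.exp (2 * π * I * ((a : ℂ) * (b : ℂ) ^ n / (m : ℂ)))‖ ≤
      ∑ r ∈ range τ, ‖∑ n ∈ (Icc 1 N).filter (fun n => n % τ = r),
        Complex.exp (2 * π * I * ((a : ℂ) * (b : ℂ) ^ n / (m : ℂ)))‖ := by
    rw [← Finset.sum_fiberwise_of_maps_to (g := fun n => n % τ) (t := range τ)
      (fun n _ => Finset.mem_range.2 (Nat.mod_lt _ hτ0))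
      (fun n => Complex.exp (2 * π * I * ((a : ℂ) * (b : ℂ) ^ n / (m : ℂ))))]
    exact norm_sum_le _ _
  have step2 : (∑ r ∈ range τ, ‖∑ n ∈ (Icc 1 N).filter (fun n => n % τ = r),
      Complex.exp (2 * π * I * ((a : ℂ) * (b : ℂ) ^ n / (m : ℂ)))‖)^2 ≤
      (τ:ℝ) * ∑ r ∈ range τ, ‖∑ n ∈ (Icc 1 N).filter (fun n => n % τ = r),
        Complex.exp (2 * π * I * ((a : ℂ) * (b : ℂ) ^ n / (m : ℂ)))‖^2 := by
    have := sq_sum_le_card_mul_sum_sq (s := range τ)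
      (f := fun r => ‖∑ n ∈ (Icc 1 N).filter (fun n => n % τ = r),
        Complex.exp (2 * π * I * ((a : ℂ) * (b : ℂ) ^ n / (m : ℂ)))‖)
    simpa using this
  have h3 := step3 b a m N τ hτ0
  set SS : ℝ := ∑ i ∈ (Finset.Ico 1 N).filter (fun i => i * τ < N),
      ‖∑ n ∈ Finset.Icc 1 (N - i * τ),
        Complex.exp (2 * π * I *
          (((a * (b ^ (i * τ) - 1) : ℤ) : ℂ) * (b : ℂ) ^ n / (m : ℂ)))‖ with hSS
  have hSSnn : 0 ≤ (N:ℝ) + 2 * SS := by positivity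
  calc ‖∑ n ∈ Finset.Icc 1 N,
        Complex.exp (2 * π * I * ((a : ℂ) * (b : ℂ) ^ n / (m : ℂ)))‖ ^ 2
      ≤ (∑ r ∈ range τ, ‖∑ n ∈ (Icc 1 N).filter (fun n => n % τ = r),
          Complex.exp (2 * π * I * ((a : ℂ) * (b : ℂ) ^ n / (m : ℂ)))‖)^2 :=
        pow_le_pow_left₀ (norm_nonneg _) step1 2
    _ ≤ (τ:ℝ) * ∑ r ∈ range τ, ‖∑ n ∈ (Icc 1 N).filter (fun n => n % τ = r),
          Complex.exp (2 * π * I * ((a : ℂ) * (b : ℂ) ^ n / (m : ℂ)))‖^2 := step2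
    _ ≤ (τ:ℝ) * ((N:ℝ) + 2 * SS) := by
        exact mul_le_mul_of_nonneg_left h3 (by positivity)
    _ ≤ (m'.natAbs : ℝ) * ((N:ℝ) + 2 * SS) := by
        exact mul_le_mul_of_nonneg_right (by exact_mod_cast hτM) hSSnn
    _ = (m'.natAbs : ℝ) * N + 2 * (m'.natAbs : ℝ) * SS := by ring
end

section
/- Define ε'_k by ε'_0 = 1 and ε'_k = (1 − 2/(2^{k+1} − 1)) ε'_{k−1} + (−2k + 1)/(2^{k+1} − 1) for k ≥ 1. Then |ε'_k| ≤ 5 for all k ≥ 0. -/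
theorem eps_bounded (ε : ℕ → ℝ) (hε0 : ε 0 = 1)
    (hε : ∀ k : ℕ, 1 ≤ k →
      ε k = (1 - 2 / (2 ^ (k + 1) - 1)) * ε (k - 1) + (-(2 * k) + 1) / (2 ^ (k + 1) - 1)) :
    ∀ k : ℕ, |ε k| ≤ 5 := by
  have key : ∀ k : ℕ, |ε k| ≤ 3 - ((k : ℝ) + 2) / 2 ^ k := by
    intro k
    induction k with
    | zero => simp [hε0]; norm_num
    | succ n ih =>
      have h := hε (n + 1) (by omega)
      simp only [Nat.add_sub_cancel] at h
      have hp : (2 : ℝ) ^ (n + 1) ≥ (n : ℝ) + 2 := by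
        have h' : n + 2 ≤ 2 ^ (n + 1) := Nat.lt_two_pow_self (n := n + 1)
        exact_mod_cast h'
      have hp2 : (2 : ℝ) ^ (n + 1 + 1) = 2 * 2 ^ (n + 1) := by ring
      have hp3 : (2 : ℝ) ^ (n + 1) = 2 * 2 ^ n := by ring
      have hpn : (1 : ℝ) ≤ 2 ^ n := one_le_pow₀ (by norm_num)
      have hdpos : (0 : ℝ) < 2 ^ (n + 1 + 1) - 1 := by nlinarith
      have ha : |1 - 2 / ((2 : ℝ) ^ (n + 1 + 1) - 1)| ≤ 1 := by
        rw [abs_le]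
        have h1 : (0 : ℝ) < 2 / (2 ^ (n + 1 + 1) - 1) := by positivity
        have h2 : 2 / ((2 : ℝ) ^ (n + 1 + 1) - 1) ≤ 1 := by
          rw [div_le_one hdpos]; nlinarith
        constructor <;> linarith
      have hb : |(-(2 * ((n : ℝ) + 1)) + 1) / (2 ^ (n + 1 + 1) - 1)| ≤
          ((n : ℝ) + 1) / 2 ^ (n + 1) := by
        rw [abs_div, abs_of_pos hdpos]
        have hn0 : (0 : ℝ) ≤ n := Nat.cast_nonneg n
        have : |(-(2 * ((n : ℝ) + 1)) + 1)| = 2 * n + 1 := by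
          rw [abs_of_nonpos (by linarith)]
          ring
        rw [this, div_le_div_iff₀ hdpos (by positivity)]
        nlinarith
      have hεn : |ε n| ≤ 3 - ((n : ℝ) + 2) / 2 ^ n := ih
      have habs : |ε (n + 1)| ≤ |1 - 2 / ((2 : ℝ) ^ (n + 1 + 1) - 1)| * |ε n| +
          |(-(2 * ((n : ℝ) + 1)) + 1) / (2 ^ (n + 1 + 1) - 1)| := by
        rw [h]
        push_cast
        calc |(1 - 2 / ((2:ℝ) ^ (n + 1 + 1) - 1)) * ε n + (-(2 * ((n:ℝ) + 1)) + 1) / (2 ^ (n + 1 + 1) - 1)|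
            ≤ |(1 - 2 / ((2:ℝ) ^ (n + 1 + 1) - 1)) * ε n| + |(-(2 * ((n:ℝ) + 1)) + 1) / (2 ^ (n + 1 + 1) - 1)| := abs_add_le _ _
          _ = _ := by rw [abs_mul]
      have hnn : (0 : ℝ) ≤ |ε n| := abs_nonneg _
      have hfin : 3 - ((n : ℝ) + 2) / 2 ^ n + ((n : ℝ) + 1) / 2 ^ (n + 1) =
          3 - (((n : ℕ) + 1 : ℝ) + 2) / 2 ^ (n + 1) := by
        field_simp
        ring
      push_cast at hfin ⊢
      nlinarith [mul_le_mul ha hεn hnn zero_le_one]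
  intro k
  have h1 := key k
  have h2 : (0 : ℝ) ≤ ((k : ℝ) + 2) / 2 ^ k := by positivity
  linarith
end

section
/- Define ε'_k by ε'_0 = 1 and ε'_k = (1 − 2/(2^{k+1} − 1)) ε'_{k−1} + (−2k + 1)/(2^{k+1} − 1) for k ≥ 1. Then (ε'_k) is a Cauchy sequence, converging to some constant c, with |ε'_k − c| ≤ (k+7)/2^{k−1} for all k ≥ 0. -/
open Filter

theorem eps_cauchy_converges (ε : ℕ → ℝ) (hε0 : ε 0 = 1)
    (hε : ∀ k : ℕ, 1 ≤ k →
      ε k = (1 - 2 / (2 ^ (k + 1) - 1)) * ε (k - 1) + (-(2 * k) + 1) / (2 ^ (k + 1) - 1)) :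
    CauchySeq ε ∧ ∃ c : ℝ, Tendsto ε atTop (nhds c) ∧
      ∀ k : ℕ, |ε k - c| ≤ ((k : ℝ) + 7) / (2 : ℝ) ^ ((k : ℤ) - 1) := by
  have hDpos : ∀ n : ℕ, (0:ℝ) < 2 ^ (n + 1 + 1) - 1 := by
    intro n
    have h1 : (1:ℝ) ≤ 2 ^ (n+1) := one_le_pow₀ (by norm_num)
    have h2 : (2:ℝ) ^ (n+1+1) = 2 * 2 ^ (n+1) := by ring
    linarith
  have hDge : ∀ n : ℕ, (2:ℝ) ^ (n + 1) ≤ 2 ^ (n + 1 + 1) - 1 := by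
    intro n
    have h1 : (1:ℝ) ≤ 2 ^ (n+1) := one_le_pow₀ (by norm_num)
    have h2 : (2:ℝ) ^ (n+1+1) = 2 * 2 ^ (n+1) := by ring
    linarith
  -- uniform bound |ε n| ≤ 4 - (2n+3)/2^n
  have hb : ∀ n : ℕ, |ε n| ≤ 4 - (2 * (n : ℝ) + 3) / 2 ^ n := by
    intro n
    induction n with
    | zero => simp [hε0]; norm_num
    | succ n ih =>
      have hP : (0:ℝ) < 2 ^ n := by positivity
      have hD0 := hDpos n
      have hD := hDge n
      have hrec := hε (n + 1) (by omega)
      simp only [Nat.add_sub_cancel] at hrec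
      have hcoef : (0:ℝ) ≤ 1 - 2 / (2 ^ (n+1+1) - 1) := by
        have h3 : (3:ℝ) ≤ 2 ^ (n+1+1) - 1 := by
          have : (4:ℝ) = 2 ^ 2 := by norm_num
          have h4 : (4:ℝ) ≤ 2 ^ (n+1+1) := by
            rw [this]; exact pow_le_pow_right₀ (by norm_num) (by omega)
          linarith
        have := div_le_div_of_nonneg_left (by norm_num : (0:ℝ) ≤ 2) (by norm_num : (0:ℝ) < 3) h3
        linarith
      have habs : |ε (n+1)| ≤ (1 - 2 / (2 ^ (n+1+1) - 1)) * |ε n|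
          + (2 * (n:ℝ) + 1) / (2 ^ (n+1+1) - 1) := by
        rw [hrec]
        refine (abs_add_le _ _).trans ?_
        gcongr
        · rw [abs_mul, abs_of_nonneg hcoef]
        · rw [abs_div, abs_of_pos hD0]
          gcongr
          push_cast
          rw [abs_le]
          constructor <;> nlinarith [Nat.cast_nonneg (α := ℝ) n]
      have h1 : (1 - 2 / (2 ^ (n+1+1) - 1)) * |ε n| ≤ |ε n| := by
        have h2 : 0 < (2:ℝ) / (2 ^ (n+1+1) - 1) := by positivity
        nlinarith [abs_nonneg (ε n)]
      have h3 : (2 * (n:ℝ) + 1) / (2 ^ (n+1+1) - 1) ≤ (2 * (n:ℝ) + 1) / 2 ^ (n+1) :=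
        div_le_div_of_nonneg_left (by positivity) (by positivity) hD
      have key : 4 - (2*(n:ℝ)+3)/2^n + (2*(n:ℝ)+1)/2^(n+1)
          = 4 - (2*((n:ℝ)+1)+3)/2^(n+1) := by
        rw [pow_succ]; field_simp; ring
      push_cast
      linarith
  have hb4 : ∀ n : ℕ, |ε n| ≤ 4 := by
    intro n
    have := hb n
    have h1 : (0:ℝ) ≤ (2 * (n : ℝ) + 3) / 2 ^ n := by positivity
    linarith
  -- distance bound
  have hdiff : ∀ n : ℕ, dist (ε n) (ε (n+1)) ≤ ((n:ℝ) + 6) * (1/2) ^ n := by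
    intro n
    have hD0 := hDpos n
    have hD := hDge n
    have hrec := hε (n + 1) (by omega)
    simp only [Nat.add_sub_cancel] at hrec
    rw [dist_comm, Real.dist_eq]
    have hdiffeq : ε (n+1) - ε n
        = -(2 / (2 ^ (n+1+1) - 1)) * ε n + (-(2 * ((n:ℝ)+1)) + 1) / (2 ^ (n+1+1) - 1) := by
      rw [hrec]; push_cast; ring
    rw [hdiffeq]
    have h1 : |(-(2 / (2 ^ (n+1+1) - 1)) * ε n + (-(2 * ((n:ℝ)+1)) + 1) / (2 ^ (n+1+1) - 1))|
        ≤ (2 / (2 ^ (n+1+1) - 1)) * 4 + (2 * (n:ℝ) + 1) / (2 ^ (n+1+1) - 1) := by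
      refine (abs_add_le _ _).trans ?_
      gcongr
      · rw [abs_mul, abs_neg, abs_of_pos (by positivity : (0:ℝ) < 2 / (2 ^ (n+1+1) - 1))]
        have := hb4 n
        nlinarith [abs_nonneg (ε n), div_pos (by norm_num : (0:ℝ) < 2) hD0]
      · rw [abs_div, abs_of_pos hD0]
        gcongr
        rw [abs_le]
        constructor <;> nlinarith [Nat.cast_nonneg (α := ℝ) n]
    have h2 : (2 / (2 ^ (n+1+1) - 1)) * 4 + (2 * (n:ℝ) + 1) / (2 ^ (n+1+1) - 1)
        ≤ (2 * (n:ℝ) + 9) / 2 ^ (n+1) := by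
      have e1 : (2 / (2 ^ (n+1+1) - 1)) * 4 + (2 * (n:ℝ) + 1) / (2 ^ (n+1+1) - 1)
          = (2 * (n:ℝ) + 9) / (2 ^ (n+1+1) - 1) := by
        field_simp
        ring
      rw [e1]
      exact div_le_div_of_nonneg_left (by positivity) (by positivity) hD
    have h3 : (2 * (n:ℝ) + 9) / 2 ^ (n+1) ≤ ((n:ℝ) + 6) * (1/2) ^ n := by
      have hP : (0:ℝ) < 2 ^ n := by positivity
      have e2 : ((n:ℝ) + 6) * (1/2) ^ n = (2 * (n:ℝ) + 12) / 2 ^ (n+1) := by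
        rw [div_pow, one_pow, pow_succ]
        field_simp
        ring
      rw [e2]
      gcongr
      linarith
    linarith
  -- summability
  have hsum1 : Summable (fun m : ℕ => (m:ℝ) * (1/2) ^ m) := by
    have := summable_pow_mul_geometric_of_norm_lt_one (R := ℝ) 1 (r := 1/2)
      (by rw [Real.norm_eq_abs, abs_of_pos] <;> norm_num)
    simpa using this
  have hsum2 : Summable (fun m : ℕ => ((1:ℝ)/2) ^ m) :=
    summable_geometric_of_lt_one (by norm_num) (by norm_num)
  have hsumd : Summable (fun n : ℕ => ((n:ℝ) + 6) * (1/2) ^ n) := by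
    have : (fun n : ℕ => ((n:ℝ) + 6) * (1/2) ^ n)
        = fun n : ℕ => (n:ℝ) * (1/2) ^ n + 6 * (1/2) ^ n := by
      funext n; ring
    rw [this]
    exact hsum1.add (hsum2.mul_left 6)
  have hcauchy : CauchySeq ε := cauchySeq_of_dist_le_of_summable _ hdiff hsumd
  obtain ⟨c, hc⟩ := cauchySeq_tendsto_of_complete hcauchy
  refine ⟨hcauchy, c, hc, fun n => ?_⟩
  have htail := dist_le_tsum_of_dist_le_of_tendsto _ hdiff hsumd hc n
  have hval1 : ∑' m : ℕ, (m:ℝ) * (1/2) ^ m = 2 := by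
    have := tsum_coe_mul_geometric_of_norm_lt_one (r := (1/2:ℝ))
      (by rw [Real.norm_eq_abs, abs_of_pos] <;> norm_num)
    rw [this]; norm_num
  have hval2 : ∑' m : ℕ, ((1:ℝ)/2) ^ m = 2 := by
    rw [tsum_geometric_of_lt_one (by norm_num) (by norm_num)]; norm_num
  have htsum : ∑' m : ℕ, ((↑(n + m) : ℝ) + 6) * (1/2) ^ (n + m)
      = (2 * (n:ℝ) + 14) * (1/2) ^ n := by
    have he : ∀ m : ℕ, ((↑(n + m) : ℝ) + 6) * (1/2) ^ (n + m)
        = (1/2:ℝ) ^ n * ((m:ℝ) * (1/2) ^ m + ((n:ℝ) + 6) * (1/2) ^ m) := by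
      intro m; push_cast; rw [pow_add]; ring
    rw [tsum_congr he, tsum_mul_left, Summable.tsum_add hsum1 (hsum2.mul_left _),
      hval1, tsum_mul_left, hval2]
    ring
  rw [← Real.dist_eq]
  refine htail.trans ?_
  rw [htsum]
  have hz : (2:ℝ) ^ ((n:ℤ) - 1) = 2 ^ n / 2 := by
    rw [zpow_sub₀ (by norm_num), zpow_natCast]; norm_num
  rw [hz]
  have hP : (0:ℝ) < 2 ^ n := by positivity
  have hfin : ((n:ℝ) + 7) / (2 ^ n / 2) = (2 * (n:ℝ) + 14) * (1/2) ^ n := by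
    rw [div_pow, one_pow]
    field_simp
    ring
  rw [hfin]
end

section
/- Let B_k be defined by B_0 = M and B_k = (2^{1+α_{k−1}} B_{k−1} M Q^{α_{k−1}} C_{k−1})^{1/2} for k ≥ 1, where α_k = 1/(2^{k+2}−2), M ≥ 1, Q ≥ 1 are reals, and each C_{k−1} satisfies 1 ≤ C_{k−1} ≤ C for a fixed constant C ≥ 1. Then B_k ≤ 2^{3/2} M Q^{1/2} C for all k ≥ 0. -/
theorem B_k_bound (M Q C : ℝ) (hM : 1 ≤ M) (hQ : 1 ≤ Q) (hC : 1 ≤ C)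
    (Ck : ℕ → ℝ) (hCk : ∀ k : ℕ, 1 ≤ Ck k ∧ Ck k ≤ C)
    (α : ℕ → ℝ) (hα : ∀ k : ℕ, α k = 1 / (2 ^ (k + 2) - 2))
    (B : ℕ → ℝ) (hB0 : B 0 = M)
    (hB : ∀ k : ℕ, 1 ≤ k →
      B k = ((2 : ℝ) ^ (1 + α (k - 1)) * B (k - 1) * M * Q ^ α (k - 1) * Ck (k - 1))
        ^ ((1 : ℝ) / 2)) :
    ∀ k : ℕ, B k ≤ (2 : ℝ) ^ ((3 : ℝ) / 2) * M * Q ^ ((1 : ℝ) / 2) * C := by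
  set L : ℝ := (2 : ℝ) ^ ((3 : ℝ) / 2) * M * Q ^ ((1 : ℝ) / 2) * C with hL
  have h2 : (1 : ℝ) ≤ (2 : ℝ) ^ ((3 : ℝ) / 2) :=
    Real.one_le_rpow one_le_two (by norm_num)
  have hQh : (1 : ℝ) ≤ Q ^ ((1 : ℝ) / 2) :=
    Real.one_le_rpow hQ (by norm_num)
  have hL1 : (1 : ℝ) ≤ L := by
    have := mul_le_mul (mul_le_mul h2 hM zero_le_one (by linarith)) hQh zero_le_one
      (by nlinarith)
    nlinarith [this]
  have hML : M ≤ L := by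
    calc M = 1 * M * 1 * 1 := by ring
    _ ≤ (2 : ℝ) ^ ((3 : ℝ) / 2) * M * Q ^ ((1 : ℝ) / 2) * C := by
        gcongr <;> linarith
  have key : ∀ k : ℕ, 0 ≤ B k ∧ B k ≤ L := by
    intro k
    induction k with
    | zero => exact ⟨hB0 ▸ by linarith, hB0 ▸ hML⟩
    | succ n ih =>
      obtain ⟨hBn0, hBnL⟩ := ih
      have hrec := hB (n + 1) (by omega)
      simp only [Nat.add_sub_cancel] at hrec
      -- bounds on α n
      have hαn := hα n
      have hpow : (4 : ℝ) ≤ 2 ^ (n + 2) := by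
        calc (4 : ℝ) = 1 * 4 := by norm_num
        _ ≤ 2 ^ n * 4 := by nlinarith [one_le_pow₀ (one_le_two (α := ℝ)) (n := n)]
        _ = 2 ^ (n + 2) := by ring
      have hα0 : 0 ≤ α n := by
        rw [hαn]; exact div_nonneg zero_le_one (by linarith)
      have hα12 : α n ≤ 1 / 2 := by
        rw [hαn]
        rw [div_le_div_iff₀ (by linarith) (by norm_num)]
        linarith
      have h1 : (2 : ℝ) ^ (1 + α n) ≤ (2 : ℝ) ^ ((3 : ℝ) / 2) :=
        Real.rpow_le_rpow_of_exponent_le one_le_two (by linarith)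
      have h3 : Q ^ α n ≤ Q ^ ((1 : ℝ) / 2) :=
        Real.rpow_le_rpow_of_exponent_le hQ hα12
      obtain ⟨hCk1, hCkC⟩ := hCk n
      have h2pos : (0 : ℝ) < (2 : ℝ) ^ (1 + α n) := Real.rpow_pos_of_pos two_pos _
      have hQpos : (0 : ℝ) < Q ^ α n := Real.rpow_pos_of_pos (by linarith) _
      have hX0 : 0 ≤ (2 : ℝ) ^ (1 + α n) * B n * M * Q ^ α n * Ck n := by
        have : 0 ≤ (2 : ℝ) ^ (1 + α n) * B n := mul_nonneg h2pos.le hBn0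
        have : 0 ≤ (2 : ℝ) ^ (1 + α n) * B n * M := mul_nonneg this (by linarith)
        have : 0 ≤ (2 : ℝ) ^ (1 + α n) * B n * M * Q ^ α n := mul_nonneg this hQpos.le
        exact mul_nonneg this (by linarith)
      have hXL : (2 : ℝ) ^ (1 + α n) * B n * M * Q ^ α n * Ck n ≤ L * L := by
        have hstep : (2 : ℝ) ^ (1 + α n) * B n * M * Q ^ α n * Ck n ≤
            (2 : ℝ) ^ ((3 : ℝ) / 2) * L * M * Q ^ ((1 : ℝ) / 2) * C := by
          gcongr <;> first | assumption | linarith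
        have heq : (2 : ℝ) ^ ((3 : ℝ) / 2) * L * M * Q ^ ((1 : ℝ) / 2) * C = L * L := by
          rw [hL]; ring
        linarith [hstep, heq ▸ hstep]
      have hL0 : (0 : ℝ) ≤ L := by linarith
      have hsq : (L * L) ^ ((1 : ℝ) / 2) = L := by
        rw [← Real.sqrt_eq_rpow]
        exact Real.sqrt_mul_self hL0
      constructor
      · rw [hrec]; positivity
      · rw [hrec, ← hsq]
        exact Real.rpow_le_rpow hX0 hXL (by norm_num)
  intro k
  exact (key k).2
end

section
/- Let b > 1 and m > 1 be coprime integers, P the set of prime divisors of m, Q the product of the primes in P, and M the largest divisor of b^{2·ord(b, rad(m))} − 1 supported on P (i.e., M = ∏_{p∈P} p^{β_p} with p^{β_p} ∥ b^{2·ord(b, rad(m))} − 1). Then ord(b, m) ≥ m/M, and M ≤ b^{2Q}. -/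
open Finset

private lemma aux_prod_dvd (n : ℕ) : ∀ (s : Finset ℕ), (∀ p ∈ s, p.Prime) →
    (∏ p ∈ s, p ^ n.factorization p) ∣ n := by
  intro s
  induction s using Finset.induction_on with
  | empty => simp
  | @insert p s hps ih =>
    intro hs
    rw [Finset.prod_insert hps]
    refine Nat.Coprime.mul_dvd_of_dvd_of_dvd ?_ (Nat.ordProj_dvd n p)
      (ih fun q hq => hs q (Finset.mem_insert_of_mem hq))
    refine Nat.Coprime.pow_left _ (Nat.Coprime.prod_right fun q hq =>
      Nat.Coprime.pow_right _ ?_)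
    exact (Nat.coprime_primes (hs p (Finset.mem_insert_self p s))
      (hs q (Finset.mem_insert_of_mem hq))).mpr (by rintro rfl; exact hps hq)

private lemma pow_sub_one_dvd_nat (b t k : ℕ) (h : t ∣ k) : b ^ t - 1 ∣ b ^ k - 1 := by
  obtain ⟨c, rfl⟩ := h
  simpa [pow_mul] using Nat.sub_dvd_pow_sub_pow (b ^ t) 1 c

private lemma padic_mono {p a c : ℕ} (pp : p.Prime) (h : a ∣ c) (ha : a ≠ 0) (hc : c ≠ 0) :
    padicValNat p a ≤ padicValNat p c := by
  rw [← Nat.factorization_def _ pp, ← Nat.factorization_def _ pp]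
  exact Finsupp.le_def.mp ((Nat.factorization_le_iff_dvd ha hc).mpr h) p

theorem order_lower_bound (b m : ℕ) (hb : 1 < b) (hm : 1 < m)
    (hcop : Nat.Coprime b m)
    (Q : ℕ) (hQ : Q = ∏ p ∈ m.primeFactors, p)
    (T : ℕ) (hT : T = orderOf (b : ZMod Q))
    (M : ℕ) (hM : M = ∏ p ∈ m.primeFactors, p ^ ((b ^ (2 * T) - 1).factorization p)) :
    m ≤ M * orderOf (b : ZMod m) ∧ M ≤ b ^ (2 * Q) := by
  have hm0 : m ≠ 0 := by omega
  have hQdvdm : Q ∣ m := hQ ▸ Nat.prod_primeFactors_dvd m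
  have hQ0 : Q ≠ 0 := fun h => hm0 (by simpa [h] using hQdvdm)
  haveI : NeZero Q := ⟨hQ0⟩
  haveI : NeZero m := ⟨hm0⟩
  have hcopQ : Nat.Coprime b Q := hcop.coprime_dvd_right hQdvdm
  set u : (ZMod Q)ˣ := ZMod.unitOfCoprime b hcopQ with hu
  have hub : (u : ZMod Q) = (b : ZMod Q) := ZMod.coe_unitOfCoprime b hcopQ
  have hTu : T = orderOf u := by rw [hT, ← hub, orderOf_units]
  have hT1 : 0 < T := hTu ▸ orderOf_pos u
  have hTQ : T ≤ Q := by
    rw [hTu]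
    calc orderOf u ≤ Fintype.card (ZMod Q)ˣ := orderOf_le_card_univ
    _ = Q.totient := ZMod.card_units_eq_totient Q
    _ ≤ Q := Nat.totient_le Q
  set d := orderOf (b : ZMod m) with hd
  set v : (ZMod m)ˣ := ZMod.unitOfCoprime b hcop with hv
  have hvb : (v : ZMod m) = (b : ZMod m) := ZMod.coe_unitOfCoprime b hcop
  have hd1 : 0 < d := by rw [hd, ← hvb, orderOf_units]; exact orderOf_pos v
  set N := b ^ (2 * T) - 1 with hN
  have hbT : 1 ≤ b ^ T := Nat.one_le_pow _ _ (by omega)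
  have hbd : 1 < b ^ d := Nat.one_lt_pow (by omega) hb
  have hN1 : 1 < b ^ (2 * T) := Nat.one_lt_pow (by omega) hb
  have hN0 : N ≠ 0 := by omega
  have hbd0 : b ^ d - 1 ≠ 0 := by omega
  have hQdvd : Q ∣ b ^ T - 1 := by
    have h1 : (b : ZMod Q) ^ T = 1 := hT ▸ pow_orderOf_eq_one _
    have h2 : ((b ^ T - 1 : ℕ) : ZMod Q) = 0 := by
      push_cast [Nat.cast_sub hbT]
      rw [h1]; ring
    exact (ZMod.natCast_eq_zero_iff _ _).mp h2
  have hmdvd : m ∣ b ^ d - 1 := by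
    have h1 : (b : ZMod m) ^ d = 1 := pow_orderOf_eq_one _
    have h2 : ((b ^ d - 1 : ℕ) : ZMod m) = 0 := by
      push_cast [Nat.cast_sub hbd.le]
      rw [h1]; ring
    exact (ZMod.natCast_eq_zero_iff _ _).mp h2
  have hQN : Q ∣ N := hQdvd.trans (pow_sub_one_dvd_nat b T (2 * T) ⟨2, by ring⟩)
  -- key per-prime inequality
  have key : ∀ p ∈ m.primeFactors,
      (b ^ d - 1).factorization p ≤ N.factorization p + d.factorization p := by
    intro p hp
    obtain ⟨pp, hpm, -⟩ := Nat.mem_primeFactors.mp hp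
    haveI : Fact p.Prime := ⟨pp⟩
    have hpb : ¬ p ∣ b :=
      (Nat.Prime.coprime_iff_not_dvd pp).mp (Nat.Coprime.coprime_dvd_left hpm hcop.symm)
    have hpN : p ∣ N := (Finset.dvd_prod_of_mem (fun p => p) hp).trans (hQ ▸ hQN)
    rw [Nat.factorization_def _ pp, Nat.factorization_def _ pp, Nat.factorization_def _ pp]
    rcases eq_or_ne p 2 with rfl | hp2
    · -- p = 2
      have h2b : ¬ (2:ℕ) ∣ b := hpb
      have hb2 : 1 < b ^ (2 * d) := Nat.one_lt_pow (by omega) hb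
      have hmono : padicValNat 2 (b ^ d - 1) ≤ padicValNat 2 (b ^ (2 * d) - 1) :=
        padic_mono pp (pow_sub_one_dvd_nat b d (2 * d) ⟨2, by ring⟩) hbd0 (by omega)
      have heq := padicValNat.pow_two_sub_pow (x := b) (y := 1) (by omega) (by omega) h2b
        (n := 2 * d) (by omega) (even_two_mul d)
      rw [one_pow] at heq
      have hv2d : padicValNat 2 (2 * d) = 1 + padicValNat 2 d := by
        rw [padicValNat.mul two_ne_zero (by omega), padicValNat.self (by norm_num)]
      have hsq : b ^ 2 - 1 = (b + 1) * (b - 1) := by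
        have := Nat.sq_sub_sq b 1
        simpa using this
      have hmul : padicValNat 2 (b + 1) + padicValNat 2 (b - 1) = padicValNat 2 (b ^ 2 - 1) := by
        rw [hsq, padicValNat.mul (by omega) (by omega)]
      have hb2N : padicValNat 2 (b ^ 2 - 1) ≤ padicValNat 2 N :=
        padic_mono pp (pow_sub_one_dvd_nat b 2 (2 * T) ⟨T, rfl⟩) (by have : 1 < b ^ 2 := Nat.one_lt_pow two_ne_zero hb; omega) hN0
      omega
    · -- odd p
      have hodd : Odd p := pp.odd_of_ne_two hp2
      have hpx : ¬ p ∣ b ^ (2 * T) := fun h => hpb (pp.dvd_of_dvd_pow h)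
      have heq := padicValNat.pow_sub_pow (p := p) hodd (x := b ^ (2 * T)) (y := 1)
        hN1 hpN hpx (n := d) (by omega)
      rw [one_pow, ← pow_mul, ← hN] at heq
      have hmono : padicValNat p (b ^ d - 1) ≤ padicValNat p (b ^ (2 * T * d) - 1) :=
        padic_mono pp (pow_sub_one_dvd_nat b d (2 * T * d) ⟨2 * T, by ring⟩) hbd0
          (by have : 1 < b ^ (2 * T * d) := Nat.one_lt_pow (by positivity) hb; omega)
      omega
  have hprimes : ∀ p ∈ m.primeFactors, p.Prime := fun p hp => (Nat.mem_primeFactors.mp hp).1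
  constructor
  · -- m ≤ M * d
    have hmd : ∀ p ∈ m.primeFactors,
        m.factorization p ≤ N.factorization p + d.factorization p := fun p hp =>
      le_trans (Finsupp.le_def.mp ((Nat.factorization_le_iff_dvd hm0 hbd0).mpr hmdvd) p)
        (key p hp)
    calc m = ∏ p ∈ m.primeFactors, p ^ m.factorization p :=
          (Nat.factorization_prod_pow_eq_self hm0).symm
    _ ≤ ∏ p ∈ m.primeFactors, p ^ (N.factorization p + d.factorization p) :=
        Finset.prod_le_prod' fun p hp =>
          Nat.pow_le_pow_right (hprimes p hp).pos (hmd p hp)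
    _ = (∏ p ∈ m.primeFactors, p ^ N.factorization p) *
          ∏ p ∈ m.primeFactors, p ^ d.factorization p := by
        rw [← Finset.prod_mul_distrib]
        exact Finset.prod_congr rfl fun p _ => pow_add p _ _
    _ = M * ∏ p ∈ m.primeFactors, p ^ d.factorization p := by rw [hM]
    _ ≤ M * d := Nat.mul_le_mul_left M
        (Nat.le_of_dvd hd1 (aux_prod_dvd d m.primeFactors hprimes))
  · -- M ≤ b ^ (2Q)
    have hMdvdN : M ∣ N := hM ▸ aux_prod_dvd N m.primeFactors hprimes
    calc M ≤ N := Nat.le_of_dvd (by omega) hMdvdN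
    _ ≤ b ^ (2 * T) := by omega
    _ ≤ b ^ (2 * Q) := Nat.pow_le_pow_right (by omega) (by omega)
end
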